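/- Let k be an algebraically closed field complete with respect to a nontrivial nonarchimedean absolute value |·| with residue field k̃, let c ∈ k^× and set r = |c|. Let η_{0,r} denote the unique multiplicative absolute value on the rational function field k(T) extending the Gauss norm of radius r on k[T], and let κ be the residue field of its valuation ring {h ∈ k(T) : η_{0,r}(h) ≤ 1}. Then the image of c^{-1}T in κ is transcendental over k̃; in particular κ has transcendence degree 1 over k̃, so η_{0,r} is a point of type II. -/

import Mathlib

noncomputable section

/-- An absolute value is nonarchimedean if it satisfies the ultrametric inequality. -/
def IsNA {F : Type*} [Field F] (v : AbsoluteValue F ℝ) : Prop :=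
  ∀ x y : F, v (x + y) ≤ max (v x) (v y)

/-- A field is complete with respect to an absolute value if every Cauchy sequence converges. -/
def SeqComplete {F : Type*} [Field F] (v : AbsoluteValue F ℝ) : Prop :=
  ∀ s : ℕ → F, (∀ ε : ℝ, 0 < ε → ∃ N : ℕ, ∀ m ≥ N, ∀ n ≥ N, v (s m - s n) < ε) →
    ∃ L : F, ∀ ε : ℝ, 0 < ε → ∃ N : ℕ, ∀ n ≥ N, v (s n - L) < ε

/-- The valuation ring `O_v = {f | v f ≤ 1}` of a nonarchimedean absolute value. -/
def vRing {F : Type*} [Field F] (v : AbsoluteValue F ℝ) (h : IsNA v) : Subring F where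
  carrier := {x : F | v x ≤ 1}
  mul_mem' := fun {a b} ha hb => by
    simp only [Set.mem_setOf_eq, map_mul] at *
    exact mul_le_one₀ ha (v.nonneg b) hb
  one_mem' := by simp only [Set.mem_setOf_eq, map_one, le_refl]
  add_mem' := fun {a b} ha hb => le_trans (h a b) (max_le ha hb)
  zero_mem' := by simp only [Set.mem_setOf_eq, map_zero, zero_le_one]
  neg_mem' := fun {a} ha => by simpa only [Set.mem_setOf_eq, v.map_neg] using ha

/-- The maximal ideal `{f | v f < 1}` of the valuation ring. -/
def vIdeal {F : Type*} [Field F] (v : AbsoluteValue F ℝ) (h : IsNA v) :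
    Ideal (vRing v h) where
  carrier := {x : vRing v h | v (x : F) < 1}
  add_mem' := fun {a b} ha hb => lt_of_le_of_lt (h a b) (max_lt ha hb)
  zero_mem' := by simp only [Set.mem_setOf_eq, ZeroMemClass.coe_zero, map_zero, zero_lt_one]
  smul_mem' := fun c x hx => by
    simp only [Set.mem_setOf_eq, smul_eq_mul, Subring.coe_mul, map_mul] at *
    have h1 : v (c : F) ≤ 1 := c.2
    nlinarith [v.nonneg (c : F), v.nonneg (x : F)]

/-- The residue field `κ(v)` of a nonarchimedean absolute value. -/
abbrev ResF {F : Type*} [Field F] (v : AbsoluteValue F ℝ) (h : IsNA v) :=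
  vRing v h ⧸ vIdeal v h

/-- The induced map of residue fields `κ(v) → κ(w)` coming from an embedding of
valued fields `σ : F → F'` with `w ∘ σ = v`. -/
def resMap {F F' : Type*} [Field F] [Field F'] (σ : F →+* F')
    (v : AbsoluteValue F ℝ) (w : AbsoluteValue F' ℝ) (hv : IsNA v) (hw : IsNA w)
    (hc : ∀ f : F, w (σ f) = v f) :
    ResF v hv →+* ResF w hw :=
  Ideal.quotientMap (vIdeal w hw)
    ((σ.comp (vRing v hv).subtype).codRestrict (vRing w hw)
      (fun x => by
        have hx : v (x : F) ≤ 1 := x.2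
        show σ (x : F) ∈ vRing w hw
        show w (σ (x : F)) ≤ 1
        rw [hc]
        exact hx))
    (fun x hx => by
      have hx' : v (x : F) < 1 := hx
      show _ ∈ vIdeal w hw
      show w (σ (x : F)) < 1
      rw [hc]
      exact hx')


/-- The Gauss norm `N_r(Σ aᵢ Tⁱ) = max_i |aᵢ| rⁱ` on the polynomial ring `k[T]`. -/
def gaussNorm {k : Type*} [Field k] (va : AbsoluteValue k ℝ) (r : ℝ)
    (f : Polynomial k) : ℝ :=
  ⨆ i : ℕ, va (f.coeff i) * r ^ i

/-!
The substitution `P ↦ P(c⁻¹T)` sends polynomials over the valuation ring of `k` into the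
valuation ring of `η = η_{0,|c|}`, with `η(P(c⁻¹T)) = maxᵢ |Pᵢ|`. So the residue of `P(c⁻¹T)`
vanishes exactly when `P` reduces to `0` over `k̃`, i.e. `t = (c⁻¹T)~` is transcendental.
Conversely, an `h ∈ k(T)` with `η(h) ≤ 1` is `f / g` with polynomials `f, g` and `η(g) = 1`
(divide numerator and denominator by a dominant monomial of the denominator evaluated at `c`),
and then `h̃ · g̃ = f̃` with `f̃, g̃ ∈ k̃[t]`, `g̃ ≠ 0`: the residue field is algebraic over `k̃(t)`.
-/

open Polynomial (C X aeval)
open scoped Polynomial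

section ValuationRing

variable {F : Type*} [Field F] {v : AbsoluteValue F ℝ} (hv : IsNA v)

instance vIdeal_isPrime : (vIdeal v hv).IsPrime where
  ne_top' h := by
    have h1 : v ((1 : vRing v hv) : F) < 1 := (Ideal.eq_top_iff_one _).mp h
    simp at h1
  mem_or_mem' {x y} hxy := by
    have hxy' : v ((x * y : vRing v hv) : F) < 1 := hxy
    rw [Subring.coe_mul, map_mul] at hxy'
    by_contra! h
    exact hxy'.not_ge (one_le_mul_of_one_le_of_one_le (not_lt.mp h.1) (not_lt.mp h.2))

theorem residue_eq_zero_iff (x : vRing v hv) :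
    Ideal.Quotient.mk (vIdeal v hv) x = 0 ↔ v (x : F) < 1 :=
  Ideal.Quotient.eq_zero_iff_mem

end ValuationRing

def vRingMap {F F' : Type*} [Field F] [Field F'] (σ : F →+* F')
    (v : AbsoluteValue F ℝ) (w : AbsoluteValue F' ℝ) (hv : IsNA v) (hw : IsNA w)
    (hc : ∀ f : F, w (σ f) = v f) : vRing v hv →+* vRing w hw :=
  (σ.comp (vRing v hv).subtype).codRestrict (vRing w hw)
    fun x => show w (σ x) ≤ 1 from (hc x).trans_le x.2

theorem resMap_mk {F F' : Type*} [Field F] [Field F'] (σ : F →+* F')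
    (v : AbsoluteValue F ℝ) (w : AbsoluteValue F' ℝ) (hv : IsNA v) (hw : IsNA w)
    (hc : ∀ f : F, w (σ f) = v f) (x : vRing v hv) :
    resMap σ v w hv hw hc (Ideal.Quotient.mk _ x) =
      Ideal.Quotient.mk _ (vRingMap σ v w hv hw hc x) :=
  Ideal.quotientMap_mk

section GaussNorm

variable {k : Type*} [Field k] (va : AbsoluteValue k ℝ) {r : ℝ}

theorem gaussNorm_eq_polynomial_gaussNorm (hr : 0 ≤ r) (p : k[X]) :
    gaussNorm va r p = p.gaussNorm va r := by
  obtain ⟨j, hj⟩ := p.exists_eq_gaussNorm va r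
  have hbdd : BddAbove (Set.range fun i => va (p.coeff i) * r ^ i) :=
    ⟨_, by rintro _ ⟨i, rfl⟩; exact p.le_gaussNorm va hr i⟩
  exact le_antisymm (ciSup_le (p.le_gaussNorm va hr)) (hj ▸ le_ciSup hbdd j)

theorem coeff_le_gaussNorm (hr : 0 ≤ r) (p : k[X]) (i : ℕ) :
    va (p.coeff i) * r ^ i ≤ gaussNorm va r p :=
  gaussNorm_eq_polynomial_gaussNorm va hr p ▸ p.le_gaussNorm va hr i

theorem gaussNorm_lt_iff (hr : 0 ≤ r) (p : k[X]) {b : ℝ} :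
    gaussNorm va r p < b ↔ ∀ i, va (p.coeff i) * r ^ i < b := by
  obtain ⟨j, hj⟩ := p.exists_eq_gaussNorm va r
  rw [gaussNorm_eq_polynomial_gaussNorm va hr, hj]
  exact ⟨fun h i => (hj ▸ p.le_gaussNorm va hr i).trans_lt h, fun h => h j⟩

theorem gaussNorm_le_iff (hr : 0 ≤ r) (p : k[X]) {b : ℝ} :
    gaussNorm va r p ≤ b ↔ ∀ i, va (p.coeff i) * r ^ i ≤ b := by
  obtain ⟨j, hj⟩ := p.exists_eq_gaussNorm va r
  rw [gaussNorm_eq_polynomial_gaussNorm va hr, hj]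
  exact ⟨fun h i => (hj ▸ p.le_gaussNorm va hr i).trans h, fun h => h j⟩

theorem exists_absoluteValue_eq_gaussNorm (c : k) (p : k[X]) :
    ∃ b : k, va b = gaussNorm va (va c) p := by
  obtain ⟨j, hj⟩ := p.exists_eq_gaussNorm va (va c)
  refine ⟨p.coeff j * c ^ j, ?_⟩
  rw [gaussNorm_eq_polynomial_gaussNorm va (va.nonneg c), hj, map_mul, map_pow]

theorem gaussNorm_comp_C_mul_X (a : k) (p : k[X]) :
    gaussNorm va r (p.comp (C a * X)) = gaussNorm va (va a * r) p := by
  simp only [gaussNorm, Polynomial.comp_C_mul_X_coeff, map_mul, map_pow, mul_pow, mul_assoc]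

end GaussNorm

theorem isTranscendenceBasis_of_forall_mul_aeval_eq {R A : Type*} [CommRing R] [Nontrivial R]
    [CommRing A] [IsDomain A] [Algebra R A] {t : A} (ht : Transcendental R t)
    (hfrac : ∀ u : A, ∃ g f : R[X], aeval t g ≠ 0 ∧ u * aeval t g = aeval t f) :
    IsTranscendenceBasis R fun _ : Unit => t := by
  have hind : AlgebraicIndependent R fun _ : Unit => t :=
    algebraicIndependent_unique_type_iff.mpr ht
  refine hind.isTranscendenceBasis_iff_isAlgebraic.mpr ⟨fun u => ?_⟩
  obtain ⟨g, f, hg, hu⟩ := hfrac u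
  rw [Set.range_const]
  have halg : ∀ p : R[X], IsAlgebraic (Algebra.adjoin R {t}) (aeval t p) := fun p =>
    isAlgebraic_algebraMap
      (⟨aeval t p, Polynomial.aeval_mem_adjoin_singleton R t⟩ : Algebra.adjoin R {t})
  refine (halg g).of_mul (mem_nonZeroDivisors_of_ne_zero hg) ?_
  rw [mul_comm, hu]
  exact halg f

theorem exists_mul_eq_of_le_one {k : Type*} [Field k] {va : AbsoluteValue k ℝ}
    {v : AbsoluteValue (RatFunc k) ℝ} (hvk : ∀ x : k, v (algebraMap k (RatFunc k) x) = va x)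
    {c : k}
    (hgauss : ∀ f : k[X], v (algebraMap k[X] (RatFunc k) f) = gaussNorm va (va c) f)
    {h : RatFunc k} (hh : v h ≤ 1) :
    ∃ g f : k[X], v (algebraMap k[X] (RatFunc k) g) = 1 ∧
      v (algebraMap k[X] (RatFunc k) f) ≤ 1 ∧
      h * algebraMap k[X] (RatFunc k) g = algebraMap k[X] (RatFunc k) f := by
  have hd0 := RatFunc.algebraMap_ne_zero h.denom_ne_zero
  obtain ⟨b, hb⟩ := exists_absoluteValue_eq_gaussNorm va c h.denom
  rw [← hgauss] at hb
  have hb0 : b ≠ 0 := by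
    rintro rfl
    exact hd0 (v.eq_zero.mp (by rw [← hb, map_zero]))
  have hC : ∀ p : k[X], algebraMap k[X] (RatFunc k) (C b⁻¹ * p) =
      algebraMap k (RatFunc k) b⁻¹ * algebraMap k[X] (RatFunc k) p := fun p => by
    rw [map_mul, IsScalarTower.algebraMap_apply k k[X] (RatFunc k), Polynomial.algebraMap_eq]
  have hg : v (algebraMap k[X] (RatFunc k) (C b⁻¹ * h.denom)) = 1 := by
    rw [hC, map_mul, hvk, map_inv₀, hb, inv_mul_cancel₀ (v.ne_zero hd0)]
  have hrel : h * algebraMap k[X] (RatFunc k) (C b⁻¹ * h.denom) =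
      algebraMap k[X] (RatFunc k) (C b⁻¹ * h.num) := by
    have hnum := RatFunc.num_div_denom h
    rw [div_eq_iff hd0] at hnum
    rw [hC, hC, hnum]
    ring
  refine ⟨_, _, hg, ?_, hrel⟩
  rw [← hrel, map_mul, hg, mul_one]
  exact hh

section Rescaling

variable {k : Type*} [Field k] {va : AbsoluteValue k ℝ} (hka : IsNA va)
  {v : AbsoluteValue (RatFunc k) ℝ} (hv : IsNA v)
  (hvk : ∀ x : k, v (algebraMap k (RatFunc k) x) = va x)

theorem C_inv_mul_X_mem_vRing {c : k} (hc : c ≠ 0)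
    (hgauss : ∀ f : k[X], v (algebraMap k[X] (RatFunc k) f) = gaussNorm va (va c) f) :
    algebraMap k[X] (RatFunc k) (C c⁻¹ * X) ∈ vRing v hv := by
  change v _ ≤ 1
  rw [hgauss, ← Polynomial.X_comp (p := C c⁻¹ * X), gaussNorm_comp_C_mul_X, map_inv₀,
    inv_mul_cancel₀ (va.pos hc).ne', gaussNorm_le_iff va zero_le_one]
  intro i
  rw [Polynomial.coeff_X]
  split_ifs <;> simp

def evalScaled {c : k} (hX : algebraMap k[X] (RatFunc k) (C c⁻¹ * X) ∈ vRing v hv) :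
    (vRing va hka)[X] →+* vRing v hv :=
  Polynomial.eval₂RingHom (vRingMap (algebraMap k (RatFunc k)) va v hka hv hvk) ⟨_, hX⟩

variable {c : k} (hX : algebraMap k[X] (RatFunc k) (C c⁻¹ * X) ∈ vRing v hv)

theorem coe_evalScaled (P : (vRing va hka)[X]) :
    (evalScaled hka hv hvk hX P : RatFunc k) =
      algebraMap k[X] (RatFunc k) ((P.map (vRing va hka).subtype).comp (C c⁻¹ * X)) := by
  suffices (vRing v hv).subtype.comp (evalScaled hka hv hvk hX) =
      (algebraMap k[X] (RatFunc k)).comp ((Polynomial.compRingHom (C c⁻¹ * X)).comp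
        (Polynomial.mapRingHom (vRing va hka).subtype)) from RingHom.congr_fun this P
  refine Polynomial.ringHom_ext (fun a => ?_) ?_
  · simp [evalScaled, vRingMap]
  · simp [evalScaled]

theorem mk_evalScaled (P : (vRing va hka)[X]) :
    Ideal.Quotient.mk (vIdeal v hv) (evalScaled hka hv hvk hX P) =
      (P.map (Ideal.Quotient.mk (vIdeal va hka))).eval₂
        (resMap (algebraMap k (RatFunc k)) va v hka hv hvk)
        (Ideal.Quotient.mk (vIdeal v hv) ⟨_, hX⟩) := by
  suffices (Ideal.Quotient.mk (vIdeal v hv)).comp (evalScaled hka hv hvk hX) =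
      (Polynomial.eval₂RingHom (resMap (algebraMap k (RatFunc k)) va v hka hv hvk)
        (Ideal.Quotient.mk (vIdeal v hv) ⟨_, hX⟩)).comp
        (Polynomial.mapRingHom (Ideal.Quotient.mk (vIdeal va hka))) from RingHom.congr_fun this P
  refine Polynomial.ringHom_ext (fun a => ?_) ?_
  · simp [evalScaled, resMap_mk]
  · simp [evalScaled]

variable {hka hv hvk hX}

theorem v_evalScaled (hc : c ≠ 0)
    (hgauss : ∀ f : k[X], v (algebraMap k[X] (RatFunc k) f) = gaussNorm va (va c) f)
    (P : (vRing va hka)[X]) :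
    v (evalScaled hka hv hvk hX P) = gaussNorm va 1 (P.map (vRing va hka).subtype) := by
  rw [coe_evalScaled, hgauss, gaussNorm_comp_C_mul_X, map_inv₀, inv_mul_cancel₀ (va.pos hc).ne']

theorem residue_evalScaled_eq_zero_iff (hc : c ≠ 0)
    (hgauss : ∀ f : k[X], v (algebraMap k[X] (RatFunc k) f) = gaussNorm va (va c) f)
    (P : (vRing va hka)[X]) :
    Ideal.Quotient.mk (vIdeal v hv) (evalScaled hka hv hvk hX P) = 0 ↔
      P.map (Ideal.Quotient.mk (vIdeal va hka)) = 0 := by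
  rw [residue_eq_zero_iff, v_evalScaled hc hgauss, gaussNorm_lt_iff va zero_le_one,
    Polynomial.ext_iff]
  simp [residue_eq_zero_iff]

theorem exists_evalScaled_eq (hc : c ≠ 0)
    (hgauss : ∀ f : k[X], v (algebraMap k[X] (RatFunc k) f) = gaussNorm va (va c) f)
    {p : k[X]} (hp : v (algebraMap k[X] (RatFunc k) p) ≤ 1) :
    ∃ P, (evalScaled hka hv hvk hX P : RatFunc k) = algebraMap k[X] (RatFunc k) p := by
  have hq : gaussNorm va 1 (p.comp (C c * X)) ≤ 1 := by
    rwa [gaussNorm_comp_C_mul_X, mul_one, ← hgauss]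
  obtain ⟨P, hP⟩ := (Polynomial.mem_lifts _).mp <|
    (Polynomial.lifts_iff_coeff_lifts (f := (vRing va hka).subtype) (p.comp (C c * X))).mpr
      fun n => ⟨⟨(p.comp (C c * X)).coeff n,
        by simpa [vRing] using (gaussNorm_le_iff va zero_le_one _).mp hq n⟩, rfl⟩
  refine ⟨P, ?_⟩
  rw [coe_evalScaled, hP, Polynomial.comp_assoc, Polynomial.mul_comp, Polynomial.C_comp,
    Polynomial.X_comp, ← mul_assoc, ← Polynomial.C_mul, mul_inv_cancel₀ hc, Polynomial.C_1,
    one_mul, Polynomial.comp_X]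

variable (hvk)

theorem eq_zero_of_eval₂_resMap_eq_zero (hc : c ≠ 0)
    (hgauss : ∀ f : k[X], v (algebraMap k[X] (RatFunc k) f) = gaussNorm va (va c) f)
    {Q : (ResF va hka)[X]}
    (hQ : Q.eval₂ (resMap (algebraMap k (RatFunc k)) va v hka hv hvk)
      (Ideal.Quotient.mk (vIdeal v hv) ⟨_, hX⟩) = 0) : Q = 0 := by
  obtain ⟨P, rfl⟩ := Polynomial.map_surjective _ Ideal.Quotient.mk_surjective Q
  rwa [← mk_evalScaled, residue_evalScaled_eq_zero_iff hc hgauss] at hQ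

theorem exists_mul_eval₂_resMap_eq (hc : c ≠ 0)
    (hgauss : ∀ f : k[X], v (algebraMap k[X] (RatFunc k) f) = gaussNorm va (va c) f)
    (u : ResF v hv) :
    ∃ g f : (ResF va hka)[X],
      g.eval₂ (resMap (algebraMap k (RatFunc k)) va v hka hv hvk)
        (Ideal.Quotient.mk (vIdeal v hv) ⟨_, hX⟩) ≠ 0 ∧
      u * g.eval₂ (resMap (algebraMap k (RatFunc k)) va v hka hv hvk)
        (Ideal.Quotient.mk (vIdeal v hv) ⟨_, hX⟩) =
      f.eval₂ (resMap (algebraMap k (RatFunc k)) va v hka hv hvk)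
        (Ideal.Quotient.mk (vIdeal v hv) ⟨_, hX⟩) := by
  obtain ⟨⟨h, hh⟩, rfl⟩ := Ideal.Quotient.mk_surjective u
  obtain ⟨g, f, hg, hf, hrel⟩ := exists_mul_eq_of_le_one hvk hgauss hh
  obtain ⟨G, hG⟩ := exists_evalScaled_eq (hvk := hvk) (hX := hX) hc hgauss hg.le
  obtain ⟨F, hF⟩ := exists_evalScaled_eq (hvk := hvk) (hX := hX) hc hgauss hf
  refine ⟨G.map (Ideal.Quotient.mk _), F.map (Ideal.Quotient.mk _), ?_, ?_⟩
  · rw [← mk_evalScaled, Ne, residue_eq_zero_iff, hG, hg]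
    exact lt_irrefl 1
  · rw [← mk_evalScaled, ← mk_evalScaled, ← map_mul]
    congr 1
    exact Subtype.ext (by simp [hG, hF, hrel])

end Rescaling

theorem statement12_general {k : Type*} [Field k]
    (va : AbsoluteValue k ℝ) (hka : IsNA va)
    (c : k) (hc : c ≠ 0) (r : ℝ) (hr : r = va c)
    -- v = η_{0,r} is the absolute value on k(T) extending the Gauss norm of radius r
    (v : AbsoluteValue (RatFunc k) ℝ) (hv : IsNA v)
    (hgauss : ∀ f : Polynomial k,
      v (algebraMap (Polynomial k) (RatFunc k) f) = gaussNorm va r f)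
    (hvk : ∀ x : k, v (algebraMap k (RatFunc k) x) = va x) :
    -- c⁻¹ T lies in the valuation ring of v, its residue class is transcendental over
    -- k̃, and κ(v) has transcendence degree 1 over k̃
    ∃ hmem : algebraMap (Polynomial k) (RatFunc k)
        (Polynomial.C c⁻¹ * Polynomial.X) ∈ vRing v hv,
      @Transcendental (ResF va hka) (ResF v hv) _ _
        (resMap (algebraMap k (RatFunc k)) va v hka hv hvk).toAlgebra
        (Ideal.Quotient.mk (vIdeal v hv)
          ⟨algebraMap (Polynomial k) (RatFunc k)
            (Polynomial.C c⁻¹ * Polynomial.X), hmem⟩) ∧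
      @IsTranscendenceBasis Unit (ResF va hka) (ResF v hv) _ _
        (resMap (algebraMap k (RatFunc k)) va v hka hv hvk).toAlgebra
        (fun _ => Ideal.Quotient.mk (vIdeal v hv)
          ⟨algebraMap (Polynomial k) (RatFunc k)
            (Polynomial.C c⁻¹ * Polynomial.X), hmem⟩) := by
  subst hr
  have hX := C_inv_mul_X_mem_vRing hv hc hgauss
  let := (resMap (algebraMap k (RatFunc k)) va v hka hv hvk).toAlgebra
  have ht : Transcendental (ResF va hka) (Ideal.Quotient.mk (vIdeal v hv) ⟨_, hX⟩) :=
    fun ⟨_, hQ, hQt⟩ => hQ (eq_zero_of_eval₂_resMap_eq_zero hvk hc hgauss hQt)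
  exact ⟨hX, ht, isTranscendenceBasis_of_forall_mul_aeval_eq ht
    (exists_mul_eval₂_resMap_eq hvk hc hgauss)⟩

/-- Let `k` be an algebraically closed field, complete with respect to
a nontrivial nonarchimedean absolute value `va` with residue field `k̃`, let `c ∈ kˣ`
and `r = |c|`.  Let `v = η_{0,r}` be the (unique) absolute value on `k(T)` extending the
Gauss norm of radius `r` on `k[T]`, with residue field `κ`.  Then the image of `c⁻¹ T`
in `κ` is transcendental over `k̃`; in particular `κ` has transcendence degree `1` over
`k̃`, so `η_{0,r}` is a point of type II. -/
theorem statement12 {k : Type*} [Field k] [IsAlgClosed k]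
    (va : AbsoluteValue k ℝ) (hka : IsNA va)
    (hknt : ∃ x : k, x ≠ 0 ∧ va x ≠ 1) (hkcomplete : SeqComplete va)
    (c : k) (hc : c ≠ 0) (r : ℝ) (hr : r = va c)
    -- v = η_{0,r} is the absolute value on k(T) extending the Gauss norm of radius r
    (v : AbsoluteValue (RatFunc k) ℝ) (hv : IsNA v)
    (hgauss : ∀ f : Polynomial k,
      v (algebraMap (Polynomial k) (RatFunc k) f) = gaussNorm va r f)
    (hvk : ∀ x : k, v (algebraMap k (RatFunc k) x) = va x) :
    -- c⁻¹ T lies in the valuation ring of v, its residue class is transcendental over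
    -- k̃, and κ(v) has transcendence degree 1 over k̃
    ∃ hmem : algebraMap (Polynomial k) (RatFunc k)
        (Polynomial.C c⁻¹ * Polynomial.X) ∈ vRing v hv,
      @Transcendental (ResF va hka) (ResF v hv) _ _
        (resMap (algebraMap k (RatFunc k)) va v hka hv hvk).toAlgebra
        (Ideal.Quotient.mk (vIdeal v hv)
          ⟨algebraMap (Polynomial k) (RatFunc k)
            (Polynomial.C c⁻¹ * Polynomial.X), hmem⟩) ∧
      @IsTranscendenceBasis Unit (ResF va hka) (ResF v hv) _ _
        (resMap (algebraMap k (RatFunc k)) va v hka hv hvk).toAlgebra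
        (fun _ => Ideal.Quotient.mk (vIdeal v hv)
          ⟨algebraMap (Polynomial k) (RatFunc k)
            (Polynomial.C c⁻¹ * Polynomial.X), hmem⟩) :=
  statement12_general va hka c hc r hr v hv hgauss hvk

end
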